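/- Let f : ℝ^n → [0,1] be measurable, let t > 0 and δ ∈ ℝ, and suppose there exists a half-space A ⊆ ℝ^n with Cov(P_t f, 1_A) ≥ δ. Then there exists a half-space A' ⊆ ℝ^n with Cov(f, 1_{A'}) ≥ δ. -/

import Mathlib

open MeasureTheory Real

noncomputable def gauss (n : ℕ) : Measure (Fin n → ℝ) :=
  Measure.pi fun _ => ProbabilityTheory.gaussianReal 0 1

/-- Expectation with respect to the standard Gaussian measure on `ℝ^n`. -/
noncomputable def gExp (n : ℕ) (f : (Fin n → ℝ) → ℝ) : ℝ := ∫ x, f x ∂(gauss n)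

/-- Covariance with respect to the standard Gaussian measure on `ℝ^n`. -/
noncomputable def gCov (n : ℕ) (f g : (Fin n → ℝ) → ℝ) : ℝ :=
  gExp n (fun x => (f x - gExp n f) * (g x - gExp n g))

/-- Variance with respect to the standard Gaussian measure on `ℝ^n`. -/
noncomputable def gVar (n : ℕ) (f : (Fin n → ℝ) → ℝ) : ℝ := gCov n f f

/-- A half-space `{x : ⟨x, a⟩ ≤ b}` in `ℝ^n`. -/
def IsHalfspace {n : ℕ} (A : Set (Fin n → ℝ)) : Prop :=
  ∃ (a : Fin n → ℝ) (b : ℝ), A = {x | ∑ i, x i * a i ≤ b}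

/-- The Ornstein--Uhlenbeck semigroup `P_t`. -/
noncomputable def ou (n : ℕ) (t : ℝ) (f : (Fin n → ℝ) → ℝ) : (Fin n → ℝ) → ℝ :=
  fun x => ∫ y, f (fun i => Real.exp (-t) * x i + Real.sqrt (1 - Real.exp (-2*t)) * y i)
    ∂(gauss n)

/-- The shifted/rescaled function `f_{t,y}(x) = f(√(1-e^{-2t}) x + e^{-t} y)`. -/
noncomputable def shift (n : ℕ) (f : (Fin n → ℝ) → ℝ) (t : ℝ) (y : Fin n → ℝ) :
    (Fin n → ℝ) → ℝ :=
  fun x => f (fun i => Real.sqrt (1 - Real.exp (-2*t)) * x i + Real.exp (-t) * y i)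

/-- `M(g)`: the supremum over half-spaces `A` of `Cov(g, 1_A)`. -/
noncomputable def Mg (n : ℕ) (g : (Fin n → ℝ) → ℝ) : ℝ :=
  ⨆ A : {A : Set (Fin n → ℝ) // IsHalfspace A}, gCov n g (Set.indicator A.1 1)

/-- `w₁(f) = Σ_i (E[X_i f(X)])²`. -/
noncomputable def w1g (n : ℕ) (f : (Fin n → ℝ) → ℝ) : ℝ :=
  ∑ i : Fin n, (gExp n (fun x => x i * f x)) ^ 2

/-!
Write `c = e^{-t}` and `s = √(1 - e^{-2t})`, so that `c² + s² = 1` and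
`P_t f (x) = E f(c x + s Y)`.
The map `(x, y) ↦ (c x + s y, s x - c y)` is an orthogonal involution of `ℝⁿ × ℝⁿ`, hence
preserves `γ_n ⊗ γ_n`; this makes `P_t` symmetric, so `Cov(P_t f, 1_A) = Cov(f, P_t 1_A)`.
Now `P_t 1_A` is the `γ_n`-average over `y` of the indicators of the half-spaces
`A_y = {x | c x + s y ∈ A}`, so by Fubini `Cov(f, P_t 1_A)` is the average of `Cov(f, 1_{A_y})`,
and some `y` does at least as well as the average.
-/

open ProbabilityTheory WithLp

section Reflection

variable {ι : Type*} {c s : ℝ}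

noncomputable def pairReflection (c s : ℝ) :
    EuclideanSpace ℝ (ι ⊕ ι) →ₗ[ℝ] EuclideanSpace ℝ (ι ⊕ ι) where
  toFun z := toLp 2 (Sum.elim (fun i => c * z (.inl i) + s * z (.inr i))
    (fun i => s * z (.inl i) - c * z (.inr i)))
  map_add' x y := by ext (i | i) <;> simp <;> ring
  map_smul' r x := by ext (i | i) <;> simp <;> ring

theorem pairReflection_involutive (hcs : c ^ 2 + s ^ 2 = 1) :
    Function.Involutive (pairReflection (ι := ι) c s) := by
  intro z
  ext (i | i) <;> simp only [pairReflection, LinearMap.coe_mk, AddHom.coe_mk, Sum.elim_inl,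
    Sum.elim_inr]
  · linear_combination z (.inl i) * hcs
  · linear_combination z (.inr i) * hcs

theorem norm_pairReflection [Fintype ι] (hcs : c ^ 2 + s ^ 2 = 1)
    (z : EuclideanSpace ℝ (ι ⊕ ι)) :
    ‖pairReflection c s z‖ = ‖z‖ := by
  rw [← sq_eq_sq₀ (norm_nonneg _) (norm_nonneg _), EuclideanSpace.real_norm_sq_eq,
    EuclideanSpace.real_norm_sq_eq, Fintype.sum_sum_type, Fintype.sum_sum_type,
    ← Finset.sum_add_distrib, ← Finset.sum_add_distrib]
  refine Finset.sum_congr rfl fun i _ => ?_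
  simp only [pairReflection, LinearMap.coe_mk, AddHom.coe_mk, Sum.elim_inl, Sum.elim_inr]
  linear_combination (z (.inl i) ^ 2 + z (.inr i) ^ 2) * hcs

noncomputable def pairReflectionIsometry [Fintype ι] (hcs : c ^ 2 + s ^ 2 = 1) :
    EuclideanSpace ℝ (ι ⊕ ι) ≃ₗᵢ[ℝ] EuclideanSpace ℝ (ι ⊕ ι) :=
  { LinearEquiv.ofInvolutive (pairReflection c s) (pairReflection_involutive hcs) with
    norm_map' := norm_pairReflection hcs }

theorem measurePreserving_pairReflection [Fintype ι] (hcs : c ^ 2 + s ^ 2 = 1) :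
    MeasurePreserving
      (fun p : (ι → ℝ) × (ι → ℝ) => (c • p.1 + s • p.2, s • p.1 - c • p.2))
      ((Measure.pi fun _ => gaussianReal 0 1).prod (Measure.pi fun _ => gaussianReal 0 1))
      ((Measure.pi fun _ => gaussianReal 0 1).prod (Measure.pi fun _ => gaussianReal 0 1)) := by
  let e := MeasurableEquiv.sumPiEquivProdPi (fun _ : ι ⊕ ι => ℝ)
  let L := MeasurableEquiv.toLp 2 (ι ⊕ ι → ℝ)
  have he : MeasurePreserving e (Measure.pi fun _ => gaussianReal 0 1) _ :=
    measurePreserving_sumPiEquivProdPi _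
  have hL : MeasurePreserving L (Measure.pi fun _ => gaussianReal 0 1)
      (stdGaussian (EuclideanSpace ℝ (ι ⊕ ι))) :=
    ⟨L.measurable, map_pi_eq_stdGaussian⟩
  have hR : MeasurePreserving (pairReflectionIsometry (ι := ι) hcs) (stdGaussian _)
      (stdGaussian _) :=
    ⟨(pairReflectionIsometry hcs).continuous.measurable, stdGaussian_map _⟩
  convert he.comp (hL.symm.comp (hR.comp (hL.comp he.symm))) using 1
  ext p i <;> simp [e, L, pairReflectionIsometry, pairReflection, MeasurableEquiv.sumPiEquivProdPi]

end Reflection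

section Covariance

variable {α β : Type*} [MeasurableSpace α] [MeasurableSpace β] {μ : Measure α}
  {ν : Measure β} {f : α → ℝ} {g : α × β → ℝ} {C D : ℝ}

theorem abs_integral_le_of_forall_abs_le [IsProbabilityMeasure μ] {h : α → ℝ}
    (hC : ∀ x, |h x| ≤ C) :
    |∫ x, h x ∂μ| ≤ C := by
  simpa using norm_integral_le_of_norm_le_const (μ := μ) (f := h) (ae_of_all _ hC)

theorem integrable_fst_mul [IsFiniteMeasure μ] [IsFiniteMeasure ν] (hf : Measurable f)
    (hg : Measurable g) (hfC : ∀ x, |f x| ≤ C) (hgD : ∀ p, |g p| ≤ D) :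
    Integrable (fun p : α × β => f p.1 * g p) (μ.prod ν) :=
  .of_bound ((hf.comp measurable_fst).mul hg).aestronglyMeasurable (C * D)
    (ae_of_all _ fun _ => norm_mul_le_of_le (hfC _) (hgD _))

theorem covariance_prod_right_eq [IsProbabilityMeasure μ] (hf : Measurable f)
    (hg : Measurable g) (hfC : ∀ x, |f x| ≤ C) (hgD : ∀ p, |g p| ≤ D) (y : β) :
    cov[f, fun x => g (x, y); μ] = ∫ x, f x * g (x, y) ∂μ - μ[f] * ∫ x, g (x, y) ∂μ :=
  covariance_eq_sub (.of_bound hf.aestronglyMeasurable C (ae_of_all _ hfC))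
    (.of_bound (hg.comp measurable_prodMk_right).aestronglyMeasurable D
      (ae_of_all _ fun _ => hgD _))

theorem integrable_covariance_prod_right [IsProbabilityMeasure μ] [IsProbabilityMeasure ν]
    (hf : Measurable f) (hg : Measurable g)
    (hfC : ∀ x, |f x| ≤ C) (hgD : ∀ p, |g p| ≤ D) :
    Integrable (fun y => cov[f, fun x => g (x, y); μ]) ν := by
  simp_rw [covariance_prod_right_eq hf hg hfC hgD]
  have hfg := integrable_fst_mul (μ := μ) (ν := ν) hf hg hfC hgD
  have hg' : Integrable g (μ.prod ν) := .of_bound hg.aestronglyMeasurable D (ae_of_all _ hgD)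
  exact hfg.integral_prod_right.sub (hg'.integral_prod_right.const_mul _)

theorem covariance_integral_prod_right [IsProbabilityMeasure μ] [IsProbabilityMeasure ν]
    (hf : Measurable f) (hg : Measurable g)
    (hfC : ∀ x, |f x| ≤ C) (hgD : ∀ p, |g p| ≤ D) :
    cov[f, fun x => ∫ y, g (x, y) ∂ν; μ] = ∫ y, cov[f, fun x => g (x, y); μ] ∂ν := by
  have hfg := integrable_fst_mul (μ := μ) (ν := ν) hf hg hfC hgD
  have hg' : Integrable g (μ.prod ν) := .of_bound hg.aestronglyMeasurable D (ae_of_all _ hgD)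
  simp_rw [covariance_prod_right_eq hf hg hfC hgD]
  rw [covariance_eq_sub (.of_bound hf.aestronglyMeasurable C (ae_of_all _ hfC))
      (.of_bound hg.stronglyMeasurable.integral_prod_right'.aestronglyMeasurable D
        (ae_of_all _ fun _ => abs_integral_le_of_forall_abs_le fun _ => hgD _)),
    integral_sub hfg.integral_prod_right (hg'.integral_prod_right.const_mul _),
    integral_const_mul, ← integral_integral_swap (f := fun x y => g (x, y)) hg']
  congr 1
  simp_rw [Pi.mul_apply, ← integral_const_mul]
  exact integral_integral_swap (f := fun x y => f x * g (x, y)) hfg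

end Covariance

theorem IsHalfspace.measurableSet {n : ℕ} {A : Set (Fin n → ℝ)} (hA : IsHalfspace A) :
    MeasurableSet A := by
  obtain ⟨a, b, rfl⟩ := hA
  exact measurableSet_le (by fun_prop) measurable_const

theorem IsHalfspace.preimage_smul_add {n : ℕ} {A : Set (Fin n → ℝ)} (hA : IsHalfspace A)
    (c : ℝ) (v : Fin n → ℝ) : IsHalfspace ((fun x => c • x + v) ⁻¹' A) := by
  obtain ⟨a, b, rfl⟩ := hA
  refine ⟨c • a, b - ∑ i, v i * a i, ?_⟩
  ext x
  simp only [Set.mem_preimage, Set.mem_ofPred_eq, Pi.add_apply, Pi.smul_apply, smul_eq_mul,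
    add_mul, Finset.sum_add_distrib, le_sub_iff_add_le, mul_assoc, mul_left_comm c]

section OrnsteinUhlenbeck

variable {n : ℕ} {t C D : ℝ} {f g : (Fin n → ℝ) → ℝ}

instance isProbabilityMeasure_gauss (n : ℕ) : IsProbabilityMeasure (gauss n) := by
  unfold gauss; infer_instance

theorem exp_neg_sq_add_sqrt_sq (ht : 0 ≤ t) : exp (-t) ^ 2 + √(1 - exp (-2 * t)) ^ 2 = 1 := by
  have : exp (-2 * t) ≤ 1 := exp_le_one_iff.2 (by linarith)
  rw [sq_sqrt (by linarith), ← exp_nat_mul]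
  ring_nf

theorem measurable_ou (hf : Measurable f) : Measurable (ou n t f) :=
  (hf.comp (by fun_prop : Measurable fun p : (Fin n → ℝ) × (Fin n → ℝ) =>
    exp (-t) • p.1 + √(1 - exp (-2 * t)) • p.2)).stronglyMeasurable
    |>.integral_prod_right'.measurable

theorem abs_ou_le (hfC : ∀ x, |f x| ≤ C) (x : Fin n → ℝ) : |ou n t f x| ≤ C :=
  abs_integral_le_of_forall_abs_le fun _ => hfC _

theorem integral_ou_mul_eq_integral_mul_ou (ht : 0 ≤ t) (hf : Measurable f) (hg : Measurable g)
    (hfC : ∀ x, |f x| ≤ C) (hgD : ∀ x, |g x| ≤ D) :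
    ∫ x, ou n t f x * g x ∂gauss n = ∫ x, f x * ou n t g x ∂gauss n := by
  set c := exp (-t)
  set s := √(1 - exp (-2 * t))
  have hcs : c ^ 2 + s ^ 2 = 1 := exp_neg_sq_add_sqrt_sq ht
  have hrefl : MeasurePreserving
      (fun p : (Fin n → ℝ) × (Fin n → ℝ) => (c • p.1 + s • p.2, s • p.1 - c • p.2))
      ((gauss n).prod (gauss n)) ((gauss n).prod (gauss n)) :=
    measurePreserving_pairReflection hcs
  have hT : Measurable fun p : (Fin n → ℝ) × (Fin n → ℝ) => c • p.1 + s • p.2 := by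
    fun_prop
  have hH : Measurable fun p : (Fin n → ℝ) × (Fin n → ℝ) =>
      f (c • p.1 + s • p.2) * g p.1 :=
    (hf.comp hT).mul (hg.comp measurable_fst)
  have hH' : Measurable fun p : (Fin n → ℝ) × (Fin n → ℝ) =>
      f p.1 * g (c • p.1 + s • p.2) :=
    (hf.comp measurable_fst).mul (hg.comp hT)
  calc ∫ x, ou n t f x * g x ∂gauss n
      = ∫ p, f (c • p.1 + s • p.2) * g p.1 ∂(gauss n).prod (gauss n) := by
        rw [integral_prod _ (.of_bound hH.aestronglyMeasurable (C * D)
          (ae_of_all _ fun p => norm_mul_le_of_le (hfC _) (hgD _)))]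
        simp_rw [integral_mul_const]
        rfl
    _ = ∫ p, f p.1 * g (c • p.1 + s • p.2) ∂(gauss n).prod (gauss n) := by
        -- the reflection is an involution, so it sends `c • x + s • y` back to `x`
        conv_lhs => rw [← hrefl.map_eq]
        rw [integral_map hrefl.measurable.aemeasurable
          (by rw [hrefl.map_eq]; exact hH.aestronglyMeasurable)]
        congr 1
        ext p
        simp only [mul_comm (f _)]
        congr 2
        ext i
        simp only [Pi.add_apply, Pi.smul_apply, Pi.sub_apply, smul_eq_mul]
        linear_combination p.1 i * hcs
    _ = ∫ x, f x * ou n t g x ∂gauss n := by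
        rw [integral_prod _ (.of_bound hH'.aestronglyMeasurable (C * D)
          (ae_of_all _ fun p => norm_mul_le_of_le (hfC _) (hgD _)))]
        simp_rw [integral_const_mul]
        rfl

theorem integral_ou (ht : 0 ≤ t) (hf : Measurable f) (hfC : ∀ x, |f x| ≤ C) :
    ∫ x, ou n t f x ∂gauss n = ∫ x, f x ∂gauss n := by
  simpa [ou] using
    integral_ou_mul_eq_integral_mul_ou ht hf measurable_const hfC fun _ => (abs_one (α := ℝ)).le

theorem gCov_ou_comm (ht : 0 ≤ t) (hf : Measurable f) (hg : Measurable g)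
    (hfC : ∀ x, |f x| ≤ C) (hgD : ∀ x, |g x| ≤ D) :
    gCov n (ou n t f) g = gCov n f (ou n t g) := by
  change cov[ou n t f, g; gauss n] = cov[f, ou n t g; gauss n]
  have memLp {h : (Fin n → ℝ) → ℝ} {E : ℝ} (hh : Measurable h) (hE : ∀ x, |h x| ≤ E) :
      MemLp h 2 (gauss n) := .of_bound hh.aestronglyMeasurable E (ae_of_all _ hE)
  rw [covariance_eq_sub (memLp (measurable_ou hf) (abs_ou_le hfC)) (memLp hg hgD),
    covariance_eq_sub (memLp hf hfC) (memLp (measurable_ou hg) (abs_ou_le hgD))]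
  simp only [Pi.mul_apply]
  rw [integral_ou_mul_eq_integral_mul_ou ht hf hg hfC hgD, integral_ou ht hf hfC,
    integral_ou ht hg hgD]

end OrnsteinUhlenbeck

theorem stmt5 (n : ℕ) (f : (Fin n → ℝ) → ℝ) (t δ : ℝ) (hf : Measurable f)
    (hrange : ∀ x, f x ∈ Set.Icc (0:ℝ) 1) (ht : 0 < t)
    (h : ∃ A : Set (Fin n → ℝ), IsHalfspace A ∧
      gCov n (ou n t f) (Set.indicator A 1) ≥ δ) :
    ∃ A' : Set (Fin n → ℝ), IsHalfspace A' ∧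
      gCov n f (Set.indicator A' 1) ≥ δ := by
  obtain ⟨A, hA, hδ⟩ := h
  have hf1 (x) : |f x| ≤ 1 := abs_le.2 ⟨by linarith [(hrange x).1], (hrange x).2⟩
  have h1A (x) : |A.indicator (1 : (Fin n → ℝ) → ℝ) x| ≤ 1 :=
    (norm_indicator_le_norm_self (1 : (Fin n → ℝ) → ℝ) x).trans (by simp)
  set c := exp (-t)
  set s := √(1 - exp (-2 * t))
  set g : (Fin n → ℝ) × (Fin n → ℝ) → ℝ := fun p =>
    A.indicator 1 (c • p.1 + s • p.2)
  have hg : Measurable g := (measurable_one.indicator hA.measurableSet).comp (by fun_prop)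
  have hcov :
      gCov n (ou n t f) (A.indicator 1) = ∫ y, gCov n f (fun x => g (x, y)) ∂gauss n := by
    rw [gCov_ou_comm ht.le hf (measurable_one.indicator hA.measurableSet) hf1 h1A]
    exact covariance_integral_prod_right hf hg hf1 fun _ => h1A _
  obtain ⟨y, hy⟩ := exists_integral_le
    (integrable_covariance_prod_right (μ := gauss n) (ν := gauss n) hf hg hf1 fun _ => h1A _)
  exact ⟨_, hA.preimage_smul_add c (s • y), (hcov ▸ hδ).trans hy⟩
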